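/- arXiv:1908.03586 — 6 statements merged into one kernel-verified Lean document; each statement's English description precedes it below -/
import Mathlib

section
/- Let a, b, c be three distinct noncollinear points in ℝ² and let d be a point such that a lies in the interior of the segment from c to d, dist(a,d) ≥ 1, and the angle at a in triangle abc is at most 90 degrees. Then the perimeter of triangle bcd exceeds the perimeter of triangle abc by more than 1. -/
/-!
Since `a` lies strictly between `c` and `d`, the angles `∠ b a c` and `∠ b a d` are supplementary,
so `∠ b a d` is at least a right angle and the law of cosines makes `b d` strictly longer than
`a b`. Together with `dist c d = dist c a + dist a d ≥ dist c a + 1` this gives the claim.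
-/

open EuclideanGeometry Real

theorem sbtw_of_mem_openSegment {E : Type*} [AddCommGroup E] [Module ℝ E] {x y z : E}
    (h : y ∈ openSegment ℝ x z) (hyz : y ≠ z) : Sbtw ℝ x y z := by
  refine sbtw_iff_mem_image_Ioo_and_ne.2 ⟨openSegment_eq_image_lineMap ℝ x z ▸ h, ?_⟩
  rintro rfl
  rw [openSegment_same, Set.mem_singleton_iff] at h
  exact hyz h

theorem EuclideanGeometry.dist_lt_dist_of_pi_div_two_le_angle {V P : Type*}
    [NormedAddCommGroup V] [InnerProductSpace ℝ V] [MetricSpace P] [NormedAddTorsor V P]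
    {p₁ p₂ p₃ : P} (h : p₃ ≠ p₂) (hangle : π / 2 ≤ ∠ p₁ p₂ p₃) : dist p₁ p₂ < dist p₁ p₃ := by
  have hcos : cos (∠ p₁ p₂ p₃) ≤ 0 :=
    cos_nonpos_of_pi_div_two_le_of_le hangle (by linarith [angle_le_pi p₁ p₂ p₃, pi_pos])
  have hlaw := dist_sq_eq_dist_sq_add_dist_sq_sub_two_mul_dist_mul_dist_mul_cos_angle p₁ p₂ p₃
  have h₂₃ : 0 < dist p₃ p₂ := dist_pos.2 h
  have hcross : 0 ≤ dist p₁ p₂ * dist p₃ p₂ * -cos (∠ p₁ p₂ p₃) :=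
    mul_nonneg (mul_nonneg dist_nonneg h₂₃.le) (neg_nonneg.2 hcos)
  nlinarith [dist_nonneg (x := p₁) (y := p₃), dist_nonneg (x := p₁) (y := p₂)]

theorem stmt_2_general (a b c d : EuclideanSpace ℝ (Fin 2))
    (hseg : a ∈ openSegment ℝ c d)
    (hdist : 1 ≤ dist a d)
    (hangle : EuclideanGeometry.angle b a c ≤ π / 2) :
    dist b c + dist c d + dist d b > dist a b + dist b c + dist c a + 1 := by
  have hsbtw : Sbtw ℝ c a d := sbtw_of_mem_openSegment hseg (dist_pos.1 (one_pos.trans_le hdist))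
  have hobtuse : π / 2 ≤ ∠ b a d := by
    linarith [angle_add_angle_eq_pi_of_angle_eq_pi b hsbtw.angle₁₂₃_eq_pi]
  have hbd : dist b a < dist b d := dist_lt_dist_of_pi_div_two_le_angle hsbtw.ne_right.symm hobtuse
  have hcd : dist c a + dist a d = dist c d := hsbtw.wbtw.dist_add_dist
  rw [dist_comm a b, dist_comm d b]
  linarith

theorem stmt_2 (a b c d : EuclideanSpace ℝ (Fin 2))
    (hncol : ¬ Collinear ℝ ({a, b, c} : Set (EuclideanSpace ℝ (Fin 2))))
    (hseg : a ∈ openSegment ℝ c d)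
    (hdist : 1 ≤ dist a d)
    (hangle : EuclideanGeometry.angle b a c ≤ π / 2) :
    dist b c + dist c d + dist d b > dist a b + dist b c + dist c a + 1 :=
  stmt_2_general a b c d hseg hdist hangle
end

section
/- Let a, b, c be three distinct noncollinear points in ℝ² and let d be a point such that a lies strictly inside triangle bcd, dist(a,d) ≥ 1, and the angle ∠bac is at most 90 degrees (π/2 radians). Then the perimeter of triangle bcd is strictly greater than the perimeter of triangle abc plus 1. -/
open EuclideanGeometry Real

/-!
Write `a - d = s • (b - a) + t • (c - a)` with `s, t > 0`, which is possible because `a` has positive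
barycentric coordinates in the triangle `bcd`. As `⟪b - a, c - a⟫ ≥ 0`, projecting `b - d` onto
`b - a` gives `|db| ≥ (1 + s) |ab|`, and likewise `|dc| ≥ (1 + t) |ac|`, while the strict triangle
inequality (`a`, `b`, `c` are not collinear) gives `|ad| < s |ab| + t |ac|`. Adding up,
`|db| + |dc| > |ab| + |ac| + |ad| ≥ |ab| + |ac| + 1`.
-/

section InnerProductSpace

variable {V : Type*} [NormedAddCommGroup V] [InnerProductSpace ℝ V]

theorem InnerProductGeometry.inner_nonneg_of_angle_le_pi_div_two {u v : V}
    (h : InnerProductGeometry.angle u v ≤ π / 2) : 0 ≤ inner ℝ u v := by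
  rw [← InnerProductGeometry.cos_angle_mul_norm_mul_norm]
  have := InnerProductGeometry.angle_nonneg u v
  exact mul_nonneg (cos_nonneg_of_mem_Icc ⟨by linarith [pi_pos], h⟩) (by positivity)

theorem one_add_mul_norm_le_norm_add_smul_add_smul {u v : V} {s t : ℝ} (ht : 0 ≤ t)
    (huv : 0 ≤ inner ℝ u v) : (1 + s) * ‖u‖ ≤ ‖u + (s • u + t • v)‖ := by
  rcases (norm_nonneg u).eq_or_lt with hu | hu
  · rw [← hu, mul_zero]
    exact norm_nonneg _
  refine le_of_mul_le_mul_right ?_ hu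
  calc (1 + s) * ‖u‖ * ‖u‖ ≤ (1 + s) * ‖u‖ ^ 2 + t * inner ℝ u v := by nlinarith
    _ = inner ℝ (u + (s • u + t • v)) u := by
      simp only [inner_add_left, real_inner_smul_left, real_inner_self_eq_norm_sq,
        real_inner_comm u v]
      ring
    _ ≤ ‖u + (s • u + t • v)‖ * ‖u‖ := real_inner_le_norm _ _

theorem norm_smul_add_smul_lt {u v : V} {s t : ℝ} (hs : 0 < s) (ht : 0 < t)
    (hray : ¬SameRay ℝ u v) : ‖s • u + t • v‖ < s * ‖u‖ + t * ‖v‖ := by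
  have hray' : ¬SameRay ℝ (s • u) (t • v) := fun h ↦ hray <| by
    simpa [hs.ne', ht.ne'] using (h.pos_smul_left (inv_pos.2 hs)).pos_smul_right (inv_pos.2 ht)
  simpa [norm_smul, abs_of_pos hs, abs_of_pos ht] using norm_add_lt_of_not_sameRay hray'

theorem norm_add_norm_add_norm_smul_add_smul_lt {u v : V} {s t : ℝ} (hs : 0 < s) (ht : 0 < t)
    (huv : 0 ≤ inner ℝ u v) (hray : ¬SameRay ℝ u v) :
    ‖u‖ + ‖v‖ + ‖s • u + t • v‖ < ‖u + (s • u + t • v)‖ + ‖v + (s • u + t • v)‖ := by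
  have hu := one_add_mul_norm_le_norm_add_smul_add_smul (s := s) ht.le huv
  have hv := one_add_mul_norm_le_norm_add_smul_add_smul (s := t) hs.le (real_inner_comm u v ▸ huv)
  rw [add_comm (t • v)] at hv
  linarith [norm_smul_add_smul_lt hs ht hray]

end InnerProductSpace

section Barycentric

variable {V : Type*} [NormedAddCommGroup V] [NormedSpace ℝ V]

theorem affineIndependent_of_mem_interior_convexHull_triple (hV : Module.finrank ℝ V = 2)
    {a b c d : V} (ha : a ∈ interior (convexHull ℝ {b, c, d})) :
    AffineIndependent ℝ ![b, c, d] := by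
  rw [affineIndependent_iff_finrank_vectorSpan_eq ℝ _ (n := 2) rfl, Matrix.range_cons,
    Matrix.range_cons_cons_empty, Set.singleton_union,
    AffineSubspace.vectorSpan_eq_top_of_affineSpan_eq_top ℝ _ _
      (affineSpan_eq_top_of_nonempty_interior ⟨a, ha⟩), finrank_top, hV]

theorem sub_eq_div_smul_add_div_smul {a b c d : V} {l₀ l₁ l₂ : ℝ} (hl₂ : l₂ ≠ 0)
    (hl : l₀ + l₁ + l₂ = 1) (ha : a = l₀ • b + l₁ • c + l₂ • d) :
    a - d = (l₀ / l₂) • (b - a) + (l₁ / l₂) • (c - a) := by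
  obtain rfl : l₂ = 1 - l₀ - l₁ := by linarith
  subst ha
  refine smul_right_injective V hl₂ ?_
  match_scalars <;> field_simp <;> ring

theorem exists_pos_smul_add_smul_of_mem_interior_convexHull (hV : Module.finrank ℝ V = 2)
    {a b c d : V} (ha : a ∈ interior (convexHull ℝ {b, c, d})) :
    ∃ s t : ℝ, 0 < s ∧ 0 < t ∧ a - d = s • (b - a) + t • (c - a) := by
  let B : AffineBasis (Fin 3) ℝ V :=
    ⟨![b, c, d], affineIndependent_of_mem_interior_convexHull_triple hV ha, by
      rw [Matrix.range_cons, Matrix.range_cons_cons_empty, Set.singleton_union]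
      exact affineSpan_eq_top_of_nonempty_interior ⟨a, ha⟩⟩
  have hpos : ∀ i, 0 < B.coord i a := by
    have hB : Set.range B = {b, c, d} := by
      change Set.range ![b, c, d] = _
      rw [Matrix.range_cons, Matrix.range_cons_cons_empty, Set.singleton_union]
    rwa [← hB, B.interior_convexHull] at ha
  refine ⟨_, _, div_pos (hpos 0) (hpos 2), div_pos (hpos 1) (hpos 2),
    sub_eq_div_smul_add_div_smul (hpos 2).ne' ?_ ?_⟩
  · simpa only [Fin.sum_univ_three] using B.sum_coord_apply_eq_one a
  · have hcomb := B.linear_combination_coord_eq_self a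
    rw [Fin.sum_univ_three] at hcomb
    exact hcomb.symm

end Barycentric

theorem not_sameRay_sub_of_not_collinear {V : Type*} [AddCommGroup V] [Module ℝ V]
    {a b c : V} (h : ¬Collinear ℝ {a, b, c}) : ¬SameRay ℝ (b - a) (c - a) := by
  intro hray
  rcases wbtw_total_of_sameRay_vsub_left (x := a) (y := b) (z := c) hray with hbtw | hbtw
  · exact h hbtw.collinear
  · exact h (Set.pair_comm c b ▸ hbtw.collinear)

theorem stmt_3 (a b c d : EuclideanSpace ℝ (Fin 2))
    (hncol : ¬ Collinear ℝ ({a, b, c} : Set (EuclideanSpace ℝ (Fin 2))))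
    (hin : a ∈ interior (convexHull ℝ ({b, c, d} : Set (EuclideanSpace ℝ (Fin 2)))))
    (hdist : 1 ≤ dist a d)
    (hangle : EuclideanGeometry.angle b a c ≤ π / 2) :
    dist b c + dist c d + dist d b > dist a b + dist b c + dist c a + 1 := by
  obtain ⟨s, t, hs, ht, hw⟩ :=
    exists_pos_smul_add_smul_of_mem_interior_convexHull finrank_euclideanSpace_fin hin
  have key := norm_add_norm_add_norm_smul_add_smul_lt (u := b - a) (v := c - a) hs ht
    (InnerProductGeometry.inner_nonneg_of_angle_le_pi_div_two hangle)
    (not_sameRay_sub_of_not_collinear hncol)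
  rw [← hw, sub_add_sub_cancel, sub_add_sub_cancel] at key
  rw [dist_eq_norm] at hdist
  rw [dist_comm d b, dist_comm a b, dist_eq_norm b d, dist_eq_norm c d, dist_eq_norm b a,
    dist_eq_norm c a]
  linarith
end

section
/- Let φ = (1+√5)/2 be the golden ratio and let f(n) = n^(log₂ φ) for real n > 0. For all positive reals x, y, n with x ≤ n/2 and y ≤ (n−x)/2, it holds that f(x) + f(y) ≤ f(n). -/
/-!
The exponent `c = log₂ φ` is exactly the one for which `f t = t ^ c` satisfies
`f (n / 2) + f (n / 4) = (φ⁻¹ + φ⁻¹ ^ 2) f n = f n`, so the extreme case `x = n / 2`, `y = n / 4`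
is an equality. Since `f` is concave, bounding `f x` and `f y` by the tangent lines at
`n / 2` and `n / 4` reduces the general case to a linear inequality in `x` and `y`.
-/

open Real

open scoped goldenRatio

namespace Real

theorem rpow_le_rpow_mul_one_add_mul_div_sub_one {p a b : ℝ} (hp₀ : 0 ≤ p) (hp₁ : p ≤ 1)
    (ha : 0 ≤ a) (hb : 0 < b) : a ^ p ≤ b ^ p * (1 + p * (a / b - 1)) := by
  have hbernoulli : (1 + (a / b - 1)) ^ p ≤ 1 + p * (a / b - 1) :=
    rpow_one_add_le_one_add_mul_self (by linarith [div_nonneg ha hb.le]) hp₀ hp₁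
  calc a ^ p = b ^ p * (a / b) ^ p := by
        rw [← mul_rpow hb.le (div_nonneg ha hb.le), mul_div_cancel₀ a hb.ne']
    _ ≤ b ^ p * (1 + p * (a / b - 1)) := by
        rw [add_sub_cancel] at hbernoulli
        gcongr

theorem div_two_pow_rpow_logb_two {r : ℝ} (hr : 0 < r) {n : ℝ} (hn : 0 ≤ n) (k : ℕ) :
    (n / 2 ^ k) ^ logb 2 r = n ^ logb 2 r / r ^ k := by
  rw [div_rpow hn (by positivity), ← rpow_pow_comm zero_le_two, rpow_logb two_pos
    (by norm_num) hr]

theorem logb_two_goldenRatio_pos : 0 < logb 2 φ :=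
  logb_pos one_lt_two one_lt_goldenRatio

theorem logb_two_goldenRatio_lt_one : logb 2 φ < 1 := by
  rw [logb_lt_iff_lt_rpow one_lt_two goldenRatio_pos, rpow_one]
  exact goldenRatio_lt_two

theorem inv_goldenRatio_add_inv_goldenRatio_sq : φ⁻¹ + φ⁻¹ ^ 2 = 1 := by
  rw [inv_goldenRatio]
  linear_combination goldenConj_sq + goldenRatio_add_goldenConj

end Real

theorem stmt_8 (x y n : ℝ) (hx : 0 < x) (hy : 0 < y) (hn : 0 < n)
    (hxn : x ≤ n / 2) (hyn : y ≤ (n - x) / 2) :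
    x ^ (Real.logb 2 ((1 + Real.sqrt 5) / 2)) +
      y ^ (Real.logb 2 ((1 + Real.sqrt 5) / 2)) ≤
    n ^ (Real.logb 2 ((1 + Real.sqrt 5) / 2)) := by
  change x ^ logb 2 φ + y ^ logb 2 φ ≤ n ^ logb 2 φ
  have hc₀ := logb_two_goldenRatio_pos
  have hc₁ := logb_two_goldenRatio_lt_one
  have hx' := rpow_le_rpow_mul_one_add_mul_div_sub_one hc₀.le hc₁.le hx.le
    (by positivity : 0 < n / 2 ^ 1)
  have hy' := rpow_le_rpow_mul_one_add_mul_div_sub_one hc₀.le hc₁.le hy.le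
    (by positivity : 0 < n / 2 ^ 2)
  rw [div_two_pow_rpow_logb_two goldenRatio_pos hn.le, div_eq_mul_inv _ (φ ^ _), ← inv_pow]
    at hx' hy'
  have hq := inv_goldenRatio_add_inv_goldenRatio_sq
  have hq₀ : 0 < φ⁻¹ := inv_pos.2 goldenRatio_pos
  generalize φ⁻¹ = q at hq hq₀ hx' hy'
  generalize logb 2 φ = c at hc₀ hc₁ hx' hy' ⊢
  have hlin : q * (x / (n / 2 ^ 1)) + q ^ 2 * (y / (n / 2 ^ 2)) ≤ 1 := by
    rw [div_div_eq_mul_div, div_div_eq_mul_div, ← mul_div_assoc, ← mul_div_assoc,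
      ← add_div, div_le_one hn]
    have hq₁ : 0 ≤ q - q ^ 2 := by nlinarith
    nlinarith [mul_le_mul_of_nonneg_left hyn (sq_nonneg q), mul_le_mul_of_nonneg_left hxn hq₁]
  have hM : 0 ≤ n ^ c * c := by positivity
  linear_combination hx' + hy' + mul_le_mul_of_nonneg_left hlin hM + n ^ c * (1 - c) * hq
end

section
/- Let G be a graph admitting an injective straight-line drawing in ℝ² in which every edge has length between 1 and h (h ≥ 1). Then the chromatic number of G is at most ⌈√2 · (h+2)⌉². -/
/-!
Colour a point by the residues modulo `n` of the indices of the cell of side `s` containing it,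
coordinate by coordinate. Two points of the same colour either lie in the same cell, and are then
closer than `√2 · s`, or differ in some cell index by a nonzero multiple of `n`, and are then
farther apart than `(n - 1) · s`. With `n = ⌈√2 (h + 2)⌉` and `s = (h + 2) / n` no edge of length
in `[1, h]` fits into either case.
-/

open Finset

lemma natCast_sub_one_lt_abs_sub_of_floor_ne {R : Type*} [Field R] [LinearOrder R]
    [IsStrictOrderedRing R] [FloorRing R] {a b : R} {n : ℕ} (hne : ⌊a⌋ ≠ ⌊b⌋)
    (hmod : ((⌊a⌋ : ℤ) : ZMod n) = ⌊b⌋) : (n : R) - 1 < |a - b| := by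
  have hdvd : (n : ℤ) ∣ |⌊a⌋ - ⌊b⌋| :=
    (dvd_abs _ _).2 ((ZMod.intCast_eq_intCast_iff_dvd_sub _ _ _).1 hmod.symm)
  have hn : (n : ℤ) ≤ |⌊a⌋ - ⌊b⌋| := Int.le_of_dvd (abs_pos.2 (sub_ne_zero.2 hne)) hdvd
  have hgap : |((⌊a⌋ - ⌊b⌋ : ℤ) : R)| < |a - b| + 1 := by
    push_cast
    rw [abs_lt]
    constructor <;>
      linarith [Int.floor_le a, Int.floor_le b, Int.lt_floor_add_one a, Int.lt_floor_add_one b,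
        le_abs_self (a - b), neg_abs_le (a - b)]
  have : (n : R) ≤ |((⌊a⌋ - ⌊b⌋ : ℤ) : R)| := by rw [← Int.cast_abs]; exact_mod_cast hn
  linarith

section Grid

variable {ι : Type*} [Fintype ι]

noncomputable def gridColor (n : ℕ) (s : ℝ) (x : EuclideanSpace ℝ ι) : ι → ZMod n :=
  fun i => (⌊x i / s⌋ : ℤ)

lemma dist_lt_or_lt_dist_of_gridColor_eq [Nonempty ι] {n : ℕ} {s : ℝ} (hs : 0 < s)
    {x y : EuclideanSpace ℝ ι} (hxy : gridColor n s x = gridColor n s y) :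
    dist x y < √(Fintype.card ι) * s ∨ (n - 1) * s < dist x y := by
  have hscale : ∀ i, |x i / s - y i / s| = dist (x i) (y i) / s := fun i => by
    rw [div_sub_div_same, abs_div, abs_of_pos hs, Real.dist_eq]
  by_cases hcell : ∀ i, ⌊x i / s⌋ = ⌊y i / s⌋
  · left
    have hcoord : ∀ i, dist (x i) (y i) < s := fun i => by
      simpa [hscale, div_lt_one hs] using Int.abs_sub_lt_one_of_floor_eq_floor (hcell i)
    calc dist x y = √(∑ i, dist (x i) (y i) ^ 2) := EuclideanSpace.dist_eq x y
      _ < √(∑ _i : ι, s ^ 2) := Real.sqrt_lt_sqrt (by positivity) <|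
          sum_lt_sum_of_nonempty univ_nonempty fun i _ =>
            pow_lt_pow_left₀ (hcoord i) dist_nonneg two_ne_zero
      _ = √(Fintype.card ι) * s := by
        rw [sum_const, card_univ, nsmul_eq_mul, Real.sqrt_mul (Nat.cast_nonneg _),
          Real.sqrt_sq hs.le]
  · right
    push Not at hcell
    obtain ⟨i, hi⟩ := hcell
    have hgap := natCast_sub_one_lt_abs_sub_of_floor_ne hi (congrFun hxy i)
    rw [hscale, lt_div_iff₀ hs] at hgap
    exact hgap.trans_le (PiLp.dist_apply_le x y i)

theorem colorable_pow_card_of_adj_dist_bounds [Nonempty ι] [DecidableEq ι] {V : Type*}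
    (G : SimpleGraph V) (n : ℕ) [NeZero n] {s : ℝ} (hs : 0 < s) (ρ : V → EuclideanSpace ℝ ι)
    (hadj : ∀ u v, G.Adj u v →
      √(Fintype.card ι) * s ≤ dist (ρ u) (ρ v) ∧ dist (ρ u) (ρ v) ≤ (n - 1) * s) :
    G.Colorable (n ^ Fintype.card ι) := by
  let C : G.Coloring (ι → ZMod n) := .mk (gridColor n s ∘ ρ) fun {u v} huv heq => by
    obtain ⟨hlo, hhi⟩ := hadj u v huv
    rcases dist_lt_or_lt_dist_of_gridColor_eq hs heq with hclose | hfar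
    · exact hclose.not_ge hlo
    · exact hfar.not_ge hhi
  simpa using C.colorable

end Grid

theorem stmt_11_general {V : Type*} (G : SimpleGraph V) (h : ℝ) (hh : 1 ≤ h)
    (ρ : V → EuclideanSpace ℝ (Fin 2))
    (hlen : ∀ u v, G.Adj u v → 1 ≤ dist (ρ u) (ρ v) ∧ dist (ρ u) (ρ v) ≤ h) :
    G.Colorable (⌈Real.sqrt 2 * (h + 2)⌉₊ ^ 2) := by
  set n := ⌈√2 * (h + 2)⌉₊
  have hsqrt2 : 1 ≤ √2 := Real.one_le_sqrt.2 one_le_two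
  have hn : √2 * (h + 2) ≤ n := Nat.le_ceil _
  have hn_pos : (0 : ℝ) < n := by nlinarith
  have : NeZero n := ⟨by exact_mod_cast hn_pos.ne'⟩
  have hs : 0 < (h + 2) / n := by positivity
  have hsmall : √2 * ((h + 2) / n) ≤ 1 := by
    rwa [← mul_div_assoc, div_le_one hn_pos]
  have hlarge : h ≤ (n - 1) * ((h + 2) / n) := by
    have hs_le : (h + 2) / n ≤ 1 := (div_le_one hn_pos).2 (by nlinarith)
    rw [sub_mul, one_mul, mul_div_cancel₀ _ hn_pos.ne']; linarith
  simpa using colorable_pow_card_of_adj_dist_bounds G n hs ρ fun u v huv =>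
    ⟨by simpa using hsmall.trans (hlen u v huv).1, (hlen u v huv).2.trans hlarge⟩

theorem stmt_11 {V : Type*} (G : SimpleGraph V) (h : ℝ) (hh : 1 ≤ h)
    (ρ : V → EuclideanSpace ℝ (Fin 2)) (hinj : Function.Injective ρ)
    (hlen : ∀ u v, G.Adj u v → 1 ≤ dist (ρ u) (ρ v) ∧ dist (ρ u) (ρ v) ≤ h) :
    G.Colorable (⌈Real.sqrt 2 * (h + 2)⌉₊ ^ 2) :=
  stmt_11_general G h hh ρ hlen
end

section
/- Let a, b, p, q, r, d be points in ℝ² such that: q lies on segment bd, p lies on segment cd (for some point c), a lies on segment bp and on segment cq, ∠(baq) ≥ π/2, and r is the intersection of segment bd with the line through p parallel to line ac. Then dist(d,p) > dist(a,q). -/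
/-!
Since `pr ∥ aq`, the triangles `baq` and `bpr` are similar with ratio `bp / ba > 1`, so
`pr > aq`. Moreover `rd` points along `bq = ba + aq`, and `∠baq ≥ π / 2` makes `⟪aq, ba + aq⟫ ≥ 0`;
hence the angle of triangle `prd` at `r` is at least a right angle and `dp ≥ pr`.
-/

open Real EuclideanGeometry

open RealInnerProductSpace

theorem InnerProductGeometry.inner_nonpos_of_pi_div_two_le_angle {V : Type*}
    [NormedAddCommGroup V] [InnerProductSpace ℝ V] {x y : V} (h : π / 2 ≤ angle x y) :
    ⟪x, y⟫ ≤ 0 := by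
  rw [← cos_angle_mul_norm_mul_norm]
  have hcos : cos (angle x y) ≤ 0 :=
    cos_nonpos_of_pi_div_two_le_of_le h (by linarith [angle_le_pi x y, pi_pos])
  exact mul_nonpos_of_nonpos_of_nonneg hcos (by positivity)

theorem norm_le_norm_add_of_inner_nonneg {V : Type*} [NormedAddCommGroup V]
    [InnerProductSpace ℝ V] {x y : V} (h : 0 ≤ ⟪x, y⟫) : ‖x‖ ≤ ‖x + y‖ := by
  rw [← sq_le_sq₀ (norm_nonneg _) (norm_nonneg _), norm_add_sq_real]
  nlinarith [sq_nonneg ‖y‖]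

theorem linearIndependent_sub_of_not_collinear {k V : Type*} [Field k] [AddCommGroup V]
    [Module k V] {a b c : V} (h : ¬ Collinear k ({b, c, a} : Set V)) :
    LinearIndependent k ![a - b, a - c] := by
  rw [LinearIndependent.pair_iff]
  intro s t hst
  by_contra hne
  apply h
  rcases not_and_or.1 hne with hs | ht
  · refine collinear_insert_of_mem_affineSpan_pair
      (mem_affineSpan_pair_iff_exists_lineMap_eq.2 ⟨1 + t / s, ?_⟩)
    apply smul_right_injective V hs
    simp only [AffineMap.lineMap_apply, vsub_eq_sub, vadd_eq_add, smul_add, smul_smul, mul_add,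
      mul_div_cancel₀ _ hs]
    linear_combination (norm := module) hst
  · rw [Set.insert_comm]
    refine collinear_insert_of_mem_affineSpan_pair
      (mem_affineSpan_pair_iff_exists_lineMap_eq.2 ⟨1 + s / t, ?_⟩)
    apply smul_right_injective V ht
    simp only [AffineMap.lineMap_apply, vsub_eq_sub, vadd_eq_add, smul_add, smul_smul, mul_add,
      mul_div_cancel₀ _ ht]
    linear_combination (norm := module) hst

theorem notMem_affineSpan_pair_of_mem_interior_convexHull {E : Type*} [NormedAddCommGroup E]
    [NormedSpace ℝ E] [FiniteDimensional ℝ E] {x y z a : E}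
    (h : ¬ Collinear ℝ ({x, y, z} : Set E)) (ha : a ∈ interior (convexHull ℝ {x, y, z})) :
    a ∉ line[ℝ, x, y] := by
  have hrange : Set.range ![x, y, z] = {x, y, z} := by
    simp only [Matrix.range_cons, Matrix.range_empty, Set.union_empty, Set.singleton_union]
  have htop : affineSpan ℝ (Set.range ![x, y, z]) = ⊤ :=
    interior_convexHull_nonempty_iff_affineSpan_eq_top.1 ⟨a, hrange ▸ ha⟩
  obtain ⟨B, hB⟩ : ∃ B : AffineBasis (Fin 3) ℝ E, ⇑B = ![x, y, z] :=
    ⟨⟨_, affineIndependent_iff_not_collinear_set.2 h, htop⟩, rfl⟩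
  -- the barycentric coordinate of `a` at `z` is positive, but it vanishes on the line `xy`
  have hpos : 0 < B.coord 2 a := by
    rw [← hrange, ← hB, B.interior_convexHull] at ha
    exact ha 2
  have hx : B.coord 2 x = 0 := by simpa [hB] using B.coord_apply_ne (i := 2) (j := 0) (by decide)
  have hy : B.coord 2 y = 0 := by simpa [hB] using B.coord_apply_ne (i := 2) (j := 1) (by decide)
  intro hline
  obtain ⟨t, rfl⟩ := mem_affineSpan_pair_iff_exists_lineMap_eq.1 hline
  rw [AffineMap.apply_lineMap, hx, hy, AffineMap.lineMap_same_apply] at hpos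
  exact hpos.false

theorem sub_eq_smul_sub_of_intercept {k V : Type*} [Field k] [AddCommGroup V] [Module k V]
    {a b c p q r : V} {l κ ρ t : k} (hind : LinearIndependent k ![a - b, a - c])
    (hp : p - b = l • (a - b)) (hq : q - a = κ • (a - c)) (hr : r - b = ρ • (q - b))
    (hpar : r - p = t • (c - a)) :
    r - p = l • (q - a) := by
  have hzero : (l - ρ) • (a - b) + (-t - ρ * κ) • (a - c) = 0 := by
    linear_combination (norm := module) hr - hp - hpar + ρ • hq
  obtain ⟨hlρ, htκ⟩ := LinearIndependent.pair_iff.1 hind _ _ hzero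
  rw [hpar, hq, smul_smul, sub_eq_zero.1 hlρ, ← neg_sub a c, smul_neg, ← neg_smul]
  congr 1
  linear_combination htκ

theorem norm_sub_lt_norm_sub_of_intercept {V : Type*} [NormedAddCommGroup V]
    [InnerProductSpace ℝ V] {a b c d p q r : V} {m κ n L t : ℝ}
    (hind : LinearIndependent ℝ ![a - b, a - c]) (hqa : q ≠ a) (hobtuse : ⟪b - a, q - a⟫ ≤ 0)
    (hp : m • (a - b) = p - a) (hm : 0 < m) (hq : κ • (a - c) = q - a)
    (hd : n • (q - b) = d - q) (hn : 0 ≤ n) (hr : b + L • (d - b) = r) (hL : L ≤ 1)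
    (hpar : r = p + t • (c - a)) :
    ‖q - a‖ < ‖d - p‖ := by
  have hrp : r - p = (1 + m) • (q - a) :=
    sub_eq_smul_sub_of_intercept hind (by linear_combination (norm := module) -hp) hq.symm
      (ρ := L * (1 + n)) (by linear_combination (norm := module) -hr - L • hd)
      (by linear_combination (norm := module) hpar)
  have hdr : d - r = ((1 - L) * (1 + n)) • (q - b) := by
    linear_combination (norm := module) hr - (1 - L) • hd
  have hinner : 0 ≤ ⟪r - p, d - r⟫ := by
    have hqaqb : ⟪q - a, q - b⟫ = ‖q - a‖ ^ 2 - ⟪b - a, q - a⟫ := by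
      rw [← real_inner_self_eq_norm_sq, real_inner_comm (q - a) (b - a), ← inner_sub_right]
      congr 1; abel
    rw [hrp, hdr, real_inner_smul_left, real_inner_smul_right, hqaqb]
    exact mul_nonneg (by linarith) (mul_nonneg (mul_nonneg (by linarith) (by linarith))
      (by linarith [sq_nonneg ‖q - a‖]))
  calc ‖q - a‖ < (1 + m) * ‖q - a‖ :=
        lt_mul_of_one_lt_left (norm_pos_iff.2 (sub_ne_zero.2 hqa)) (by linarith)
    _ = ‖r - p‖ := by rw [hrp, norm_smul, norm_of_nonneg (by positivity)]
    _ ≤ ‖r - p + (d - r)‖ := norm_le_norm_add_of_inner_nonneg hinner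
    _ = ‖d - p‖ := by congr 1; abel

theorem stmt_17 (a b c d p q r : EuclideanSpace ℝ (Fin 2))
    (hncol : ¬ Collinear ℝ ({b, c, d} : Set (EuclideanSpace ℝ (Fin 2))))
    (ha : a ∈ interior (convexHull ℝ ({b, c, d} : Set (EuclideanSpace ℝ (Fin 2)))))
    (hq : q ∈ segment ℝ b d)
    (hp : p ∈ segment ℝ c d)
    (hap : a ∈ segment ℝ b p)
    (haq : a ∈ segment ℝ c q)
    (hangle : π / 2 ≤ EuclideanGeometry.angle b a q)
    (hr : r ∈ segment ℝ b d)
    (hpar : ∃ t : ℝ, r = p + t • (c - a)) :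
    dist d p > dist a q := by
  have hbdc : ({b, c, d} : Set (EuclideanSpace ℝ (Fin 2))) = {b, d, c} := by rw [Set.pair_comm]
  have hcdb : ({b, c, d} : Set (EuclideanSpace ℝ (Fin 2))) = {c, d, b} := by
    rw [Set.insert_comm, Set.pair_comm]
  have ha_bc := notMem_affineSpan_pair_of_mem_interior_convexHull hncol ha
  have ha_bd := notMem_affineSpan_pair_of_mem_interior_convexHull (hbdc ▸ hncol) (hbdc ▸ ha)
  have ha_cd := notMem_affineSpan_pair_of_mem_interior_convexHull (hcdb ▸ hncol) (hcdb ▸ ha)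
  have hind : LinearIndependent ℝ ![a - b, a - c] := linearIndependent_sub_of_not_collinear
    fun h ↦ ha_bc (h.mem_affineSpan_of_mem_of_ne (by simp) (by simp) (by simp)
      (ne₁₂_of_not_collinear hncol))
  have hpa : p ≠ a := fun h ↦ ha_cd (h ▸ (mem_segment_iff_wbtw.1 hp).mem_affineSpan)
  have hqa : q ≠ a := fun h ↦ ha_bd (h ▸ (mem_segment_iff_wbtw.1 hq).mem_affineSpan)
  have hqb : q ≠ b := fun h ↦
    ha_bc (Set.pair_comm b c ▸ (h ▸ mem_segment_iff_wbtw.1 haq).mem_affineSpan)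
  obtain ⟨m, hm, hpm⟩ :=
    (sameRay_of_mem_segment hap).exists_pos_left (hind.ne_zero 0) (sub_ne_zero.2 hpa)
  obtain ⟨κ, -, hqκ⟩ :=
    (sameRay_of_mem_segment haq).exists_pos_left (hind.ne_zero 1) (sub_ne_zero.2 hqa)
  obtain ⟨n, hn, hdn⟩ := (sameRay_of_mem_segment hq).exists_nonneg_left (sub_ne_zero.2 hqb)
  obtain ⟨L, ⟨-, hL⟩, hrL⟩ := segment_eq_image' ℝ b d ▸ hr
  obtain ⟨t, hpar⟩ := hpar
  rw [gt_iff_lt, dist_comm a q, dist_eq_norm, dist_eq_norm]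
  exact norm_sub_lt_norm_sub_of_intercept hind hqa
    (InnerProductGeometry.inner_nonpos_of_pi_div_two_le_angle hangle) hpm hm hqκ hdn hn hrL hL hpar
end

section
/- For every n ≥ 2, every tree on n vertices admits a planar straight-line drawing in ℝ² in which all edges have length exactly 1 (hence trees have planar edge-length ratio equal to 1). -/
/-!
Root the tree and give every vertex `v` an interval of slopes `[lo v, hi v]`, the intervals being
nested along parent links and pairwise disjoint among siblings. Draw the edge from the parent of `v`
to `v` as the unit vector of slope `lo v`. Every edge then points to the right, so x-coordinates
increase strictly away from the root, and the subtree below `v` lies in the wedge with apex at the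
parent of `v` spanned by the slopes in `[lo v, hi v]`. Wedges of siblings meet only at their common
apex, which separates edges in different branches; two edges on a common root path are separated by
their x-coordinates.
-/

/-- A straight-line drawing is planar if segments representing distinct edges
intersect only at images of shared endpoints. -/
def IsPlanarDrawing {V : Type*} (G : SimpleGraph V)
    (ρ : V → EuclideanSpace ℝ (Fin 2)) : Prop :=
  ∀ u v u' v', G.Adj u v → G.Adj u' v' → s(u, v) ≠ s(u', v') →
    ∀ x, x ∈ segment ℝ (ρ u) (ρ v) → x ∈ segment ℝ (ρ u') (ρ v') →
      ∃ w, x = ρ w ∧ (w = u ∨ w = v) ∧ (w = u' ∨ w = v')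

open Relation

local notation "ℝ²" => EuclideanSpace ℝ (Fin 2)

theorem eq_left_of_mem_segment_of_le {E : Type*} [AddCommGroup E] [Module ℝ E]
    (f : E →ₗ[ℝ] ℝ) {x y z : E} (hz : z ∈ segment ℝ x y) (hxy : f x < f y) (h : f z ≤ f x) :
    z = x := by
  obtain ⟨a, b, ha, hb, hab, rfl⟩ := hz
  simp only [map_add, map_smul, smul_eq_mul] at h
  have hb0 : b * (f y - f x) ≤ 0 := by linear_combination h - f x * hab
  obtain rfl : b = 0 := by nlinarith [mul_nonneg hb (sub_pos.2 hxy).le]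
  simp_all

theorem eq_right_of_mem_segment_of_le {E : Type*} [AddCommGroup E] [Module ℝ E]
    (f : E →ₗ[ℝ] ℝ) {x y z : E} (hz : z ∈ segment ℝ x y) (hxy : f x < f y) (h : f y ≤ f z) :
    z = y := by
  refine eq_left_of_mem_segment_of_le (-f) ?_ (by simpa using hxy) (by simpa using h)
  rwa [segment_symm]

theorem segment_eq_segment_of_sym2_eq {α E : Type*} [AddCommGroup E] [Module ℝ E] (f : α → E)
    {u v a b : α} (h : s(u, v) = s(a, b)) : segment ℝ (f u) (f v) = segment ℝ (f a) (f b) := by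
  rcases Sym2.eq_iff.1 h with ⟨rfl, rfl⟩ | ⟨rfl, rfl⟩
  · rfl
  · exact segment_symm ℝ _ _

noncomputable def unitSlope (s : ℝ) : ℝ² := (√(1 + s ^ 2))⁻¹ • !₂[1, s]

theorem unitSlope_apply_zero (s : ℝ) : unitSlope s 0 = (√(1 + s ^ 2))⁻¹ := by
  simp [unitSlope]

theorem unitSlope_apply_one (s : ℝ) : unitSlope s 1 = s * unitSlope s 0 := by
  simp [unitSlope, mul_comm]

theorem unitSlope_apply_zero_pos (s : ℝ) : 0 < unitSlope s 0 := by
  rw [unitSlope_apply_zero]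
  positivity

theorem norm_unitSlope (s : ℝ) : ‖unitSlope s‖ = 1 := by
  have h : ‖(!₂[1, s] : ℝ²)‖ = √(1 + s ^ 2) := by
    simp [EuclideanSpace.norm_eq, Fin.sum_univ_two]
  rw [unitSlope, norm_smul, h, norm_inv, Real.norm_of_nonneg (Real.sqrt_nonneg _),
    inv_mul_cancel₀ (by positivity)]

/-- For `a < b`, the closed wedge with apex `P` between the rightward rays of slopes `a` and `b`. -/
def sector (P : ℝ²) (a b : ℝ) : Set ℝ² :=
  {z | a * (z 0 - P 0) ≤ z 1 - P 1 ∧ z 1 - P 1 ≤ b * (z 0 - P 0)}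

theorem mem_sector {P z : ℝ²} {a b : ℝ} :
    z ∈ sector P a b ↔ a * (z 0 - P 0) ≤ z 1 - P 1 ∧ z 1 - P 1 ≤ b * (z 0 - P 0) :=
  Iff.rfl

theorem apex_mem_sector (P : ℝ²) (a b : ℝ) : P ∈ sector P a b := by
  simp [sector]

theorem add_unitSlope_mem_sector {P z : ℝ²} {a b s : ℝ} (hz : z ∈ sector P a b)
    (ha : a ≤ s) (hb : s ≤ b) : z + unitSlope s ∈ sector P a b := by
  obtain ⟨h₁, h₂⟩ := hz
  have hu := unitSlope_apply_zero_pos s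
  rw [mem_sector, PiLp.add_apply, PiLp.add_apply, unitSlope_apply_one]
  constructor <;> nlinarith

theorem convex_sector (P : ℝ²) (a b : ℝ) : Convex ℝ (sector P a b) := by
  intro z ⟨hz₁, hz₂⟩ z' ⟨hz₁', hz₂'⟩ t t' ht ht' htt'
  simp only [mem_sector, PiLp.add_apply, PiLp.smul_apply, smul_eq_mul]
  obtain rfl : t' = 1 - t := by linarith
  constructor <;> nlinarith [mul_le_mul_of_nonneg_left hz₁ ht, mul_le_mul_of_nonneg_left hz₂ ht,
    mul_le_mul_of_nonneg_left hz₁' ht', mul_le_mul_of_nonneg_left hz₂' ht']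

theorem fst_apex_le_of_mem_sector {P z : ℝ²} {a b : ℝ} (hab : a < b) (hz : z ∈ sector P a b) :
    P 0 ≤ z 0 := by
  obtain ⟨h₁, h₂⟩ := hz
  nlinarith

theorem eq_apex_of_mem_sector_of_mem_sector {P z : ℝ²} {a b a' b' : ℝ} (hab : a < b)
    (hba' : b < a') (hz : z ∈ sector P a b) (hz' : z ∈ sector P a' b') : z = P := by
  have h₀ : z 0 = P 0 := by
    nlinarith [fst_apex_le_of_mem_sector hab hz, hz.2, hz'.1]
  have h₁ : z 1 = P 1 := by
    obtain ⟨h₁, h₂⟩ := hz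
    rw [h₀, sub_self, mul_zero] at h₁ h₂
    linarith
  ext i
  fin_cases i
  · exact h₀
  · exact h₁

/-- A rooted tree given by parent pointers; `depth` only certifies that following `parent` from any
vertex reaches `root`, and `parent root` is irrelevant. -/
structure Arborescence (V : Type*) where
  root : V
  parent : V → V
  depth : V → ℕ
  depth_parent_lt {v : V} : v ≠ root → depth (parent v) < depth v

namespace Arborescence

variable {V : Type*} (T : Arborescence V)

@[elab_as_elim]
theorem induction {P : V → Prop} (root : P T.root)
    (step : ∀ v, v ≠ T.root → P (T.parent v) → P v) (v : V) : P v := by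
  by_cases hv : v = T.root
  · exact hv ▸ root
  · exact step v hv (induction root step (T.parent v))
termination_by T.depth v
decreasing_by exact T.depth_parent_lt hv

open scoped Classical in
noncomputable def descend {α : Type*} (base : α) (step : V → α → α) (v : V) : α :=
  if _ : v = T.root then base else step v (descend base step (T.parent v))
termination_by T.depth v
decreasing_by exact T.depth_parent_lt ‹_›

section descend

variable {α : Type*} (base : α) (step : V → α → α)

theorem descend_root : T.descend base step T.root = base := by
  rw [descend, dif_pos rfl]

theorem descend_of_ne_root {v : V} (hv : v ≠ T.root) :
    T.descend base step v = step v (T.descend base step (T.parent v)) := by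
  rw [descend, dif_neg hv]

end descend

def IsParent (a b : V) : Prop := b ≠ T.root ∧ T.parent b = a

def IsAncestor : V → V → Prop := ReflTransGen T.IsParent

structure Siblings (g g' : V) : Prop where
  ne : g ≠ g'
  left_ne_root : g ≠ T.root
  right_ne_root : g' ≠ T.root
  parent_eq : T.parent g = T.parent g'

def Orients (G : SimpleGraph V) : Prop :=
  ∀ ⦃u v⦄, G.Adj u v → ∃ c, c ≠ T.root ∧ s(u, v) = s(T.parent c, c)

variable {T}

theorem Siblings.symm {g g' : V} (h : T.Siblings g g') : T.Siblings g' g :=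
  ⟨h.ne.symm, h.right_ne_root, h.left_ne_root, h.parent_eq.symm⟩

theorem isAncestor_root (v : V) : T.IsAncestor T.root v :=
  T.induction .refl (fun _ hv h => h.tail ⟨hv, rfl⟩) v

theorem IsAncestor.transGen {a b : V} (h : T.IsAncestor a b) (hab : a ≠ b) :
    TransGen T.IsParent a b :=
  (reflTransGen_iff_eq_or_transGen.1 h).resolve_left hab.symm

theorem IsAncestor.exists_child {a b : V} (h : T.IsAncestor a b) (hab : a ≠ b) :
    ∃ g, T.IsParent a g ∧ T.IsAncestor g b :=
  TransGen.head'_iff.1 (h.transGen hab)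

theorem IsAncestor.isAncestor_parent {a b : V} (h : T.IsAncestor a b) (hab : a ≠ b) :
    b ≠ T.root ∧ T.IsAncestor a (T.parent b) := by
  rcases h.cases_tail with rfl | ⟨c, hac, hb, rfl⟩
  · exact absurd rfl hab
  · exact ⟨hb, hac⟩

theorem IsAncestor.transGen_parent {g c : V} (h : T.IsAncestor g c) (hg : g ≠ T.root) :
    TransGen T.IsParent (T.parent g) c :=
  .head' ⟨hg, rfl⟩ h

theorem IsAncestor.parent_parent {g c : V} (h : T.IsAncestor g c) (hg : g ≠ T.root) :
    T.IsAncestor (T.parent g) (T.parent c) := by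
  by_cases hgc : g = c
  · exact hgc ▸ .refl
  · exact .head ⟨hg, rfl⟩ (h.isAncestor_parent hgc).2

theorem isAncestor_trichotomy (a b : V) :
    T.IsAncestor a b ∨ T.IsAncestor b a ∨
      ∃ g g', T.Siblings g g' ∧ T.IsAncestor g a ∧ T.IsAncestor g' b := by
  induction b using T.induction with
  | root => exact .inr (.inl (isAncestor_root a))
  | step b hb ih =>
    rcases ih with h | h | ⟨g, g', hgg', hga, hg'b⟩
    · exact .inl (h.tail ⟨hb, rfl⟩)
    · by_cases hba : T.parent b = a
      · exact .inl (hba ▸ .single ⟨hb, rfl⟩)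
      · obtain ⟨g, ⟨hg, hpg⟩, hga⟩ := h.exists_child hba
        by_cases hgb : g = b
        · exact .inr (.inl (hgb ▸ hga))
        · exact .inr (.inr ⟨g, b, ⟨hgb, hg, hb, hpg⟩, hga, .refl⟩)
    · exact .inr (.inr ⟨g, g', hgg', hga, hg'b.tail ⟨hb, rfl⟩⟩)

structure NestedIntervals (T : Arborescence V) where
  lo : V → ℝ
  hi : V → ℝ
  lo_lt_hi (v : V) : lo v < hi v
  lo_parent_le {v : V} : v ≠ T.root → lo (T.parent v) ≤ lo v
  hi_le_hi_parent {v : V} : v ≠ T.root → hi v ≤ hi (T.parent v)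
  lt_or_lt_of_siblings {g g' : V} : T.Siblings g g' → hi g < lo g' ∨ hi g' < lo g

/-- The child `v` of a vertex with interval `[l, l + w]` gets `[l + q w, l + 5 q w / 4]` where
`q = 2⁻¹ ^ (ι v + 1)`; for `ι v < ι v'` the interval of `v'` then lies below that of `v`. -/
theorem nonempty_nestedIntervals [Countable V] (T : Arborescence V) :
    Nonempty T.NestedIntervals := by
  obtain ⟨ι, hι⟩ := exists_injective_nat V
  set q : V → ℝ := fun v => (1 / 2) ^ (ι v + 1)
  set J : V → ℝ × ℝ := T.descend (0, 1) fun v J => (J.1 + q v * J.2, q v * J.2 / 4)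
  have hJ : ∀ {v}, v ≠ T.root →
      J v = ((J (T.parent v)).1 + q v * (J (T.parent v)).2, q v * (J (T.parent v)).2 / 4) :=
    T.descend_of_ne_root _ _
  have hq_pos : ∀ v, 0 < q v := fun v => by positivity
  have hq_le : ∀ v, q v ≤ 1 / 2 := fun v =>
    pow_le_of_le_one (by norm_num) (by norm_num) (Nat.succ_ne_zero _)
  have hq_lt : ∀ {v w}, ι v < ι w → q w ≤ q v / 2 := fun {v w} h => calc
    q w ≤ (1 / 2) ^ (ι v + 1 + 1) := pow_le_pow_of_le_one (by norm_num) (by norm_num) (by omega)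
    _ = q v / 2 := by rw [pow_succ]; ring
  have hwidth_pos : ∀ v, 0 < (J v).2 := T.induction (by simp [J, descend_root])
    fun v hv _ => by rw [hJ hv]; have := hq_pos v; positivity
  have hsep : ∀ {v w}, T.Siblings v w → ι v < ι w → (J w).1 + (J w).2 < (J v).1 :=
    fun {v w} h hvw => by
      rw [hJ h.left_ne_root, hJ h.right_ne_root, ← h.parent_eq]
      nlinarith [hq_lt hvw, hq_pos w, hwidth_pos (T.parent v)]
  refine ⟨{
    lo := fun v => (J v).1
    hi := fun v => (J v).1 + (J v).2
    lo_lt_hi := fun v => lt_add_of_pos_right _ (hwidth_pos v)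
    lo_parent_le := fun {v} hv => ?_
    hi_le_hi_parent := fun {v} hv => ?_
    lt_or_lt_of_siblings := fun {g g'} h => ?_ }⟩
  · rw [hJ hv]
    exact le_add_of_nonneg_right (mul_nonneg (hq_pos v).le (hwidth_pos _).le)
  · rw [hJ hv]
    nlinarith [hq_le v, hq_pos v, hwidth_pos (T.parent v)]
  · rcases lt_or_gt_of_ne (hι.ne h.ne) with hlt | hlt
    · exact .inr (hsep h hlt)
    · exact .inl (hsep h.symm hlt)

namespace NestedIntervals

variable (I : T.NestedIntervals)

theorem lo_le_and_hi_le_of_isAncestor {g u : V} (h : T.IsAncestor g u) :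
    I.lo g ≤ I.lo u ∧ I.hi u ≤ I.hi g := by
  induction h with
  | refl => exact ⟨le_rfl, le_rfl⟩
  | tail _ hc ih =>
    obtain ⟨hc, rfl⟩ := hc
    exact ⟨ih.1.trans (I.lo_parent_le hc), (I.hi_le_hi_parent hc).trans ih.2⟩

noncomputable def drawing : V → ℝ² := T.descend 0 fun v P => P + unitSlope (I.lo v)

theorem drawing_of_ne_root {v : V} (hv : v ≠ T.root) :
    I.drawing v = I.drawing (T.parent v) + unitSlope (I.lo v) :=
  T.descend_of_ne_root _ _ hv

theorem dist_drawing_parent {v : V} (hv : v ≠ T.root) :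
    dist (I.drawing (T.parent v)) (I.drawing v) = 1 := by
  rw [I.drawing_of_ne_root hv, dist_self_add_right, norm_unitSlope]

theorem fst_drawing_parent_lt {v : V} (hv : v ≠ T.root) :
    I.drawing (T.parent v) 0 < I.drawing v 0 := by
  rw [I.drawing_of_ne_root hv, PiLp.add_apply]
  exact lt_add_of_pos_right _ (unitSlope_apply_zero_pos _)

theorem fst_drawing_lt_of_transGen {a b : V} (h : TransGen T.IsParent a b) :
    I.drawing a 0 < I.drawing b 0 := by
  induction h with
  | single hc => exact hc.2 ▸ I.fst_drawing_parent_lt hc.1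
  | tail _ hc ih => exact ih.trans (hc.2 ▸ I.fst_drawing_parent_lt hc.1)

theorem fst_drawing_le_of_isAncestor {a b : V} (h : T.IsAncestor a b) :
    I.drawing a 0 ≤ I.drawing b 0 := by
  by_cases hab : a = b
  · exact hab ▸ le_rfl
  · exact (I.fst_drawing_lt_of_transGen (h.transGen hab)).le

theorem drawing_mem_sector {g u : V} (hg : g ≠ T.root) (h : T.IsAncestor g u) :
    I.drawing u ∈ sector (I.drawing (T.parent g)) (I.lo g) (I.hi g) := by
  induction h with
  | refl =>
    rw [I.drawing_of_ne_root hg]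
    exact add_unitSlope_mem_sector (apex_mem_sector _ _ _) le_rfl (I.lo_lt_hi g).le
  | @tail _ c hgu hc ih =>
    obtain ⟨hc, rfl⟩ := hc
    have hgc := I.lo_le_and_hi_le_of_isAncestor (hgu.tail ⟨hc, rfl⟩)
    rw [I.drawing_of_ne_root hc]
    exact add_unitSlope_mem_sector ih hgc.1 ((I.lo_lt_hi c).le.trans hgc.2)

theorem segment_subset_sector {g c : V} (hg : g ≠ T.root) (h : T.IsAncestor g c) :
    segment ℝ (I.drawing (T.parent c)) (I.drawing c) ⊆
      sector (I.drawing (T.parent g)) (I.lo g) (I.hi g) := by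
  refine (convex_sector _ _ _).segment_subset ?_ (I.drawing_mem_sector hg h)
  by_cases hgc : g = c
  · exact hgc ▸ apex_mem_sector _ _ _
  · exact I.drawing_mem_sector hg (h.isAncestor_parent hgc).2

theorem eq_of_mem_sector_of_siblings {g g' : V} {z : ℝ²} (h : T.Siblings g g')
    (hz : z ∈ sector (I.drawing (T.parent g)) (I.lo g) (I.hi g))
    (hz' : z ∈ sector (I.drawing (T.parent g')) (I.lo g') (I.hi g')) :
    z = I.drawing (T.parent g) := by
  rw [← h.parent_eq] at hz'
  rcases I.lt_or_lt_of_siblings h with hlt | hlt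
  · exact eq_apex_of_mem_sector_of_mem_sector (I.lo_lt_hi g) hlt hz hz'
  · exact eq_apex_of_mem_sector_of_mem_sector (I.lo_lt_hi g') hlt hz' hz

theorem drawing_injective : Function.Injective I.drawing := by
  intro a b hab
  by_contra hne
  have hab₀ : I.drawing a 0 = I.drawing b 0 := by rw [hab]
  rcases isAncestor_trichotomy a b with h | h | ⟨g, g', hgg', hga, hg'b⟩
  · exact (I.fst_drawing_lt_of_transGen (h.transGen hne)).ne hab₀
  · exact (I.fst_drawing_lt_of_transGen (h.transGen (Ne.symm hne))).ne' hab₀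
  · have ha := I.eq_of_mem_sector_of_siblings hgg' (I.drawing_mem_sector hgg'.left_ne_root hga)
      (hab ▸ I.drawing_mem_sector hgg'.right_ne_root hg'b)
    exact (I.fst_drawing_lt_of_transGen (hga.transGen_parent hgg'.left_ne_root)).ne'
      (by rw [ha])

theorem eq_parent_of_drawing_mem_segment {a c : V} (hc : c ≠ T.root)
    (ha : T.IsAncestor a (T.parent c))
    (hx : I.drawing a ∈ segment ℝ (I.drawing (T.parent c)) (I.drawing c)) :
    a = T.parent c :=
  I.drawing_injective <| eq_left_of_mem_segment_of_le (EuclideanSpace.proj 0 : ℝ² →L[ℝ] ℝ) hx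
    (I.fst_drawing_parent_lt hc) (I.fst_drawing_le_of_isAncestor ha)

theorem eq_drawing_of_mem_segment_of_isAncestor {c c' : V} {x : ℝ²} (hc : c ≠ T.root)
    (h : T.IsAncestor c c') (hne : c ≠ c')
    (hx : x ∈ segment ℝ (I.drawing (T.parent c)) (I.drawing c))
    (hx' : x ∈ segment ℝ (I.drawing (T.parent c')) (I.drawing c')) :
    x = I.drawing c ∧ c = T.parent c' := by
  obtain ⟨g, ⟨hg, hgc⟩, hgc'⟩ := h.exists_child hne
  have hxc : x = I.drawing c := by
    refine eq_right_of_mem_segment_of_le (EuclideanSpace.proj 0 : ℝ² →L[ℝ] ℝ) hx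
      (I.fst_drawing_parent_lt hc) ?_
    have := fst_apex_le_of_mem_sector (I.lo_lt_hi g) (I.segment_subset_sector hg hgc' hx')
    rwa [hgc] at this
  subst hxc
  obtain ⟨hc', hcc'⟩ := h.isAncestor_parent hne
  exact ⟨rfl, I.eq_parent_of_drawing_mem_segment hc' hcc' hx'⟩

theorem exists_eq_drawing_of_mem_segment_inter {c c' : V} {x : ℝ²} (hc : c ≠ T.root)
    (hc' : c' ≠ T.root) (hne : c ≠ c')
    (hx : x ∈ segment ℝ (I.drawing (T.parent c)) (I.drawing c))
    (hx' : x ∈ segment ℝ (I.drawing (T.parent c')) (I.drawing c')) :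
    ∃ w, x = I.drawing w ∧ (w = T.parent c ∨ w = c) ∧ (w = T.parent c' ∨ w = c') := by
  rcases isAncestor_trichotomy c c' with h | h | ⟨g, g', hgg', hgc, hg'c'⟩
  · obtain ⟨rfl, hcc'⟩ := I.eq_drawing_of_mem_segment_of_isAncestor hc h hne hx hx'
    exact ⟨c, rfl, .inr rfl, .inl hcc'⟩
  · obtain ⟨rfl, hc'c⟩ := I.eq_drawing_of_mem_segment_of_isAncestor hc' h (Ne.symm hne) hx' hx
    exact ⟨c', rfl, .inl hc'c, .inr rfl⟩
  · obtain rfl := I.eq_of_mem_sector_of_siblings hgg'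
      (I.segment_subset_sector hgg'.left_ne_root hgc hx)
      (I.segment_subset_sector hgg'.right_ne_root hg'c' hx')
    have hg'c'' := hg'c'.parent_parent hgg'.right_ne_root
    rw [← hgg'.parent_eq] at hg'c''
    exact ⟨T.parent g, rfl,
      .inl (I.eq_parent_of_drawing_mem_segment hc (hgc.parent_parent hgg'.left_ne_root) hx),
      .inl (I.eq_parent_of_drawing_mem_segment hc' hg'c'' hx')⟩

variable {G : SimpleGraph V}

theorem isPlanarDrawing (hT : T.Orients G) : IsPlanarDrawing G I.drawing := by
  intro u v u' v' huv hu'v' hne x hx hx'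
  obtain ⟨c, hc, he⟩ := hT huv
  obtain ⟨c', hc', he'⟩ := hT hu'v'
  rw [segment_eq_segment_of_sym2_eq _ he] at hx
  rw [segment_eq_segment_of_sym2_eq _ he'] at hx'
  obtain ⟨w, rfl, hw, hw'⟩ := I.exists_eq_drawing_of_mem_segment_inter hc hc'
    (by rintro rfl; exact hne (he.trans he'.symm)) hx hx'
  refine ⟨w, rfl, ?_, ?_⟩
  · rwa [← Sym2.mem_iff, he, Sym2.mem_iff]
  · rwa [← Sym2.mem_iff, he', Sym2.mem_iff]

theorem dist_drawing_of_adj (hT : T.Orients G) {u v : V} (h : G.Adj u v) :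
    dist (I.drawing u) (I.drawing v) = 1 := by
  obtain ⟨c, hc, he⟩ := hT h
  rcases Sym2.eq_iff.1 he with ⟨rfl, rfl⟩ | ⟨rfl, rfl⟩
  · exact I.dist_drawing_parent hc
  · rw [dist_comm]
    exact I.dist_drawing_parent hc

end NestedIntervals

end Arborescence

namespace SimpleGraph

variable {V : Type*} {G : SimpleGraph V}

theorem Walk.dist_le_of_mem_support_of_length_eq_dist {r u w : V} {q : G.Walk r u}
    (hq : q.length = G.dist r u) (hw : w ∈ q.support) : G.dist r w ≤ G.dist r u := by
  classical
  exact (dist_le _).trans ((q.length_takeUntil_le_length hw).trans hq.le)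

theorem IsAcyclic.penultimate_eq_of_adj (hG : G.IsAcyclic) {r u v : V} {p : G.Walk r v}
    (hp : p.IsPath) (h : G.Adj u v) (hr : G.Reachable r u)
    (hd : G.dist r v = G.dist r u + 1) : p.penultimate = u := by
  obtain ⟨q, hq, hqlen⟩ := hr.exists_path_of_dist
  have hv : v ∉ q.support := fun hv => by
    have := Walk.dist_le_of_mem_support_of_length_eq_dist hqlen hv
    omega
  exact (hG.eq_penultimate_of_adj_end hp h.symm
    (hG.mem_support_of_ne_mem_support_of_adj_of_isPath hp hq h.symm hv)).symm

theorem IsTree.exists_arborescence_orients (hG : G.IsTree) :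
    ∃ T : Arborescence V, T.Orients G := by
  obtain ⟨r⟩ := hG.connected.nonempty
  choose P hP hPlen using hG.connected.exists_path_of_dist r
  refine ⟨{ root := r
            parent := fun v => (P v).penultimate
            depth := G.dist r
            depth_parent_lt := fun {v} hv => ?_ }, fun u v h => ?_⟩
  · have := hG.connected.pos_dist_of_ne (Ne.symm hv)
    calc G.dist r (P v).penultimate ≤ (P v).dropLast.length := dist_le _
      _ < G.dist r v := by rw [Walk.length_dropLast, hPlen]; omega
  · rcases hG.dist_eq_dist_add_one_of_adj r h with hd | hd
    · refine ⟨u, by rintro rfl; simp at hd, ?_⟩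
      dsimp only
      rw [hG.isAcyclic.penultimate_eq_of_adj (hP u) h.symm (hG.connected r v) hd, Sym2.eq_swap]
    · refine ⟨v, by rintro rfl; simp at hd, ?_⟩
      dsimp only
      rw [hG.isAcyclic.penultimate_eq_of_adj (hP v) h (hG.connected r u) hd]

end SimpleGraph

theorem stmt_18_general {V : Type*} [Fintype V] (G : SimpleGraph V) (hG : G.IsTree) :
    ∃ ρ : V → EuclideanSpace ℝ (Fin 2), Function.Injective ρ ∧
      IsPlanarDrawing G ρ ∧ ∀ u v, G.Adj u v → dist (ρ u) (ρ v) = 1 := by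
  obtain ⟨T, hT⟩ := hG.exists_arborescence_orients
  obtain ⟨I⟩ := T.nonempty_nestedIntervals
  exact ⟨I.drawing, I.drawing_injective, I.isPlanarDrawing hT,
    fun _ _ => I.dist_drawing_of_adj hT⟩

theorem stmt_18 {V : Type*} [Fintype V] (n : ℕ) (hn : 2 ≤ n)
    (hcard : Fintype.card V = n) (G : SimpleGraph V) (hG : G.IsTree) :
    ∃ ρ : V → EuclideanSpace ℝ (Fin 2), Function.Injective ρ ∧
      IsPlanarDrawing G ρ ∧ ∀ u v, G.Adj u v → dist (ρ u) (ρ v) = 1 :=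
  stmt_18_general G hG
end
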